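/- arXiv:1501.06689 — 6 statements merged into one kernel-verified Lean document; each statement's English description precedes it below -/
import Mathlib

section
/- For any graph G = (V, E), the sum over all edges (x,y) ∈ E of min{deg(x), deg(y)} is at most 2·α(G)·|E|, where α(G) denotes the arboricity of G. -/
open SimpleGraph

lemma myIsAcyclic_of_le {V : Type*} {F G : SimpleGraph V} (h : F ≤ G) (hG : G.IsAcyclic) :
    F.IsAcyclic := fun _ c hc => hG _ (hc.mapLe h)

lemma myExists_leaf {V : Type*} [Fintype V] {F : SimpleGraph V} (hF : F.IsAcyclic)
    {x y : V} (hxy : F.Adj x y) :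
    ∃ v w, F.Adj v w ∧ ∀ z, F.Adj v z → z = w := by
  classical
  set L : Set ℕ := {n | ∃ (u v : V) (p : F.Walk u v), p.IsPath ∧ p.length = n} with hL
  have hbdd : BddAbove L := ⟨Fintype.card V, fun n hn => by
    obtain ⟨u, v, p, hp, rfl⟩ := hn
    exact hp.length_lt.le⟩
  have h1 : (1 : ℕ) ∈ L := ⟨x, y, .cons hxy .nil, by simp [hxy.ne], by simp⟩
  obtain ⟨u, v, p, hp, hl⟩ := Nat.sSup_mem ⟨1, h1⟩ hbdd
  have hmax : ∀ (a b : V) (q : F.Walk a b), q.IsPath → q.length ≤ p.length := by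
    intro a b q hq
    rw [hl]
    exact le_csSup hbdd ⟨a, b, q, hq, rfl⟩
  have hlen : 1 ≤ p.length := by rw [hl]; exact le_csSup hbdd h1
  cases p with
  | nil => simp at hlen
  | @cons _ w _ h q =>
    refine ⟨u, w, h, fun z hz => ?_⟩
    by_contra hzw
    rw [Walk.cons_isPath_iff] at hp
    by_cases hmem : z ∈ q.support
    · -- build a cycle
      have hq' : (q.takeUntil z hmem).IsPath := hp.1.takeUntil hmem
      have hP : (Walk.cons h (q.takeUntil z hmem)).IsPath := by
        rw [Walk.cons_isPath_iff]
        exact ⟨hq', fun hu => hp.2 (q.support_takeUntil_subset hmem hu)⟩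
      have hc : (Walk.cons hz (Walk.cons h (q.takeUntil z hmem)).reverse).IsCycle := by
        rw [Walk.cons_isCycle_iff]
        refine ⟨hP.reverse, ?_⟩
        rw [Walk.edges_reverse, List.mem_reverse]
        simp only [Walk.edges_cons, List.mem_cons]
        rintro (habs | habs)
        · rw [Sym2.eq_iff] at habs
          rcases habs with ⟨-, h2⟩ | ⟨h3, h4⟩
          · exact hzw h2
          · subst h4; exact F.irrefl hz
        · exact hp.2 ((q.support_takeUntil_subset hmem)
            ((q.takeUntil z hmem).fst_mem_support_of_mem_edges habs))
      exact hF _ hc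
    · -- extend the path
      have hmem' : z ∉ (Walk.cons h q).support := by
        rw [Walk.support_cons, List.mem_cons]
        push_neg
        exact ⟨fun h' => F.irrefl (h' ▸ hz), hmem⟩
      have hext : (Walk.cons hz.symm (Walk.cons h q)).IsPath := by
        rw [Walk.cons_isPath_iff]
        exact ⟨by rw [Walk.cons_isPath_iff]; exact hp, hmem'⟩
      have := hmax _ _ _ hext
      simp only [Walk.length_cons] at this
      omega

lemma myExists_injOn {V : Type*} [Fintype V] [DecidableEq V] (n : ℕ) :
    ∀ F : SimpleGraph V, F.edgeSet.ncard = n → F.IsAcyclic →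
      ∃ φ : Sym2 V → V, Set.InjOn φ F.edgeSet ∧ ∀ e ∈ F.edgeSet, φ e ∈ e := by
  induction n using Nat.strong_induction_on with
  | _ n ih =>
    intro F hn hF
    classical
    rcases Set.eq_empty_or_nonempty F.edgeSet with he | ⟨e, he⟩
    · exact ⟨fun e => (Quot.out e).1, by simp [he], by simp [he]⟩
    · have hadj : ∃ a b, F.Adj a b := by
        induction e using Sym2.ind with
        | _ a b => exact ⟨a, b, he⟩
      obtain ⟨a, b, hab⟩ := hadj
      obtain ⟨v, w, hvw, hleaf⟩ := myExists_leaf hF hab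
      set F' := F.deleteEdges {s(v, w)} with hF'
      have hle : F' ≤ F := sdiff_le
      have hes : F'.edgeSet = F.edgeSet \ {s(v, w)} := edgeSet_deleteEdges _
      have hmemvw : s(v, w) ∈ F.edgeSet := hvw
      have hlt : F'.edgeSet.ncard < n := by
        rw [hes, ← hn]
        exact Set.ncard_diff_singleton_lt_of_mem hmemvw F.edgeSet.toFinite
      obtain ⟨φ', hinj', hmem'⟩ := ih _ hlt F' rfl (myIsAcyclic_of_le hle hF)
      have hne : ∀ e ∈ F'.edgeSet, φ' e ≠ v := by
        intro e heF' habs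
        have hv : v ∈ e := habs ▸ hmem' e heF'
        induction e using Sym2.ind with
        | _ c d =>
          have hcd : F'.Adj c d := heF'
          have hnotvw : s(c, d) ≠ s(v, w) := by
            intro h'
            rw [hes] at heF'
            exact heF'.2 h'
          rw [Sym2.mem_iff] at hv
          rcases hv with rfl | rfl
          · exact hnotvw (by rw [hleaf d (hle hcd)])
          · exact hnotvw (by rw [hleaf c (hle hcd.symm), Sym2.eq_swap])
      refine ⟨fun e => if e = s(v, w) then v else φ' e, ?_, ?_⟩
      · intro e1 h1 e2 h2 heq
        dsimp only at heq
        by_cases h1' : e1 = s(v, w) <;> by_cases h2' : e2 = s(v, w)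
        · rw [h1', h2']
        · rw [if_pos h1', if_neg h2'] at heq
          exact absurd heq.symm (hne e2 (by rw [hes]; exact ⟨h2, h2'⟩))
        · rw [if_neg h1', if_pos h2'] at heq
          exact absurd heq (hne e1 (by rw [hes]; exact ⟨h1, h1'⟩))
        · rw [if_neg h1', if_neg h2'] at heq
          exact hinj' (by rw [hes]; exact ⟨h1, h1'⟩) (by rw [hes]; exact ⟨h2, h2'⟩) heq
      · intro e heF
        dsimp only
        by_cases h' : e = s(v, w)
        · rw [if_pos h', h']
          exact Sym2.mem_mk_left v w
        · rw [if_neg h']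
          exact hmem' e (by rw [hes]; exact ⟨heF, h'⟩)

lemma myIsAcyclic_singleton {V : Type*} [DecidableEq V] (e : Sym2 V) :
    (SimpleGraph.fromEdgeSet {e}).IsAcyclic := by
  intro v c hc
  have h3 := hc.three_le_length
  have hcard : c.edges.toFinset.card = c.edges.length :=
    List.toFinset_card_of_nodup hc.edges_nodup
  have hsub : c.edges.toFinset ⊆ {e} := by
    intro a ha
    rw [List.mem_toFinset] at ha
    have := c.edges_subset_edgeSet ha
    rw [SimpleGraph.edgeSet_fromEdgeSet] at this
    simpa using this.1
  have hle := Finset.card_le_card hsub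
  rw [hcard, c.length_edges, Finset.card_singleton] at hle
  omega

/-- The arboricity of a graph: the minimum number of forests (acyclic subgraphs)
needed to cover all edges. -/
noncomputable def arboricity {V : Type*} (G : SimpleGraph V) : ℕ :=
  sInf {n | ∃ f : Fin n → SimpleGraph V,
    (∀ i, (f i).IsAcyclic) ∧ (∀ i, f i ≤ G) ∧
    ∀ e ∈ G.edgeSet, ∃ i, e ∈ (f i).edgeSet}

/-- Chiba–Nishizeki: `∑_{(x,y)∈E} min (deg x) (deg y) ≤ 2 · α(G) · |E|`. -/
theorem sum_min_degree_le_two_arboricity_mul_card_edges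
    {V : Type*} [Fintype V] [DecidableEq V] (G : SimpleGraph V)
    [DecidableRel G.Adj] :
    ∑ e ∈ G.edgeFinset,
        Sym2.lift ⟨fun x y => min (G.degree x) (G.degree y),
          fun x y => by simp [min_comm]⟩ e
      ≤ 2 * arboricity G * G.edgeFinset.card := by
  classical
  set md : Sym2 V → ℕ := Sym2.lift ⟨fun x y => min (G.degree x) (G.degree y),
    fun x y => by simp [min_comm]⟩ with hmd
  have hmin : ∀ (v : V) (e : Sym2 V), v ∈ e → md e ≤ G.degree v := by
    intro v e hv
    induction e using Sym2.ind with
    | _ a b =>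
      rw [Sym2.mem_iff] at hv
      rcases hv with rfl | rfl
      · simpa [hmd] using min_le_left _ _
      · simpa [hmd] using min_le_right _ _
  have hne : {n | ∃ f : Fin n → SimpleGraph V,
      (∀ i, (f i).IsAcyclic) ∧ (∀ i, f i ≤ G) ∧
      ∀ e ∈ G.edgeSet, ∃ i, e ∈ (f i).edgeSet}.Nonempty := by
    refine ⟨G.edgeFinset.card,
      fun i => SimpleGraph.fromEdgeSet {(G.edgeFinset.equivFin.symm i : Sym2 V)},
      fun i => myIsAcyclic_singleton _, fun i => ?_, fun e he => ?_⟩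
    · intro a b hab
      rw [SimpleGraph.fromEdgeSet_adj] at hab
      obtain ⟨h1, -⟩ := hab
      rw [Set.mem_singleton_iff] at h1
      have hm : ((G.edgeFinset.equivFin.symm i : Sym2 V)) ∈ G.edgeSet :=
        mem_edgeFinset.1 (G.edgeFinset.equivFin.symm i).2
      rw [← h1] at hm
      exact hm
    · refine ⟨G.edgeFinset.equivFin ⟨e, mem_edgeFinset.2 he⟩, ?_⟩
      rw [SimpleGraph.edgeSet_fromEdgeSet]
      refine ⟨?_, G.not_isDiag_of_mem_edgeSet he⟩
      simp
  have hmem : ∃ f : Fin (arboricity G) → SimpleGraph V,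
      (∀ i, (f i).IsAcyclic) ∧ (∀ i, f i ≤ G) ∧
      ∀ e ∈ G.edgeSet, ∃ i, e ∈ (f i).edgeSet := Nat.sInf_mem hne
  obtain ⟨f, hacyc, hle, hcover⟩ := hmem
  set Ei : Fin (arboricity G) → Finset (Sym2 V) :=
    fun i => (f i).edgeSet.toFinite.toFinset with hEidef
  have hEi : ∀ i e, e ∈ Ei i ↔ e ∈ (f i).edgeSet := fun i e => Set.Finite.mem_toFinset _
  have hEsub : ∀ i, Ei i ⊆ G.edgeFinset := by
    intro i e he
    rw [mem_edgeFinset]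
    exact SimpleGraph.edgeSet_mono (hle i) ((hEi i e).1 he)
  have hforest : ∀ i, ∑ e ∈ Ei i, md e ≤ 2 * G.edgeFinset.card := by
    intro i
    obtain ⟨φ, hinj, hmemφ⟩ := myExists_injOn _ (f i) rfl (hacyc i)
    calc ∑ e ∈ Ei i, md e
        ≤ ∑ e ∈ Ei i, G.degree (φ e) :=
          Finset.sum_le_sum fun e he => hmin (φ e) e (hmemφ e ((hEi i e).1 he))
      _ = ∑ v ∈ (Ei i).image φ, G.degree v := by
          rw [Finset.sum_image (fun x hx y hy hxy =>
            hinj ((hEi i x).1 hx) ((hEi i y).1 hy) hxy)]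
      _ ≤ ∑ v, G.degree v := Finset.sum_le_sum_of_subset (Finset.subset_univ _)
      _ = 2 * G.edgeFinset.card := G.sum_degrees_eq_twice_card_edges
  calc ∑ e ∈ G.edgeFinset, md e
      ≤ ∑ e ∈ G.edgeFinset, ∑ i : Fin (arboricity G), if e ∈ Ei i then md e else 0 := by
        refine Finset.sum_le_sum fun e he => ?_
        obtain ⟨i₀, hi₀⟩ := hcover e (mem_edgeFinset.1 he)
        calc md e = if e ∈ Ei i₀ then md e else 0 := by rw [if_pos ((hEi i₀ e).2 hi₀)]
          _ ≤ _ := Finset.single_le_sum (f := fun i => if e ∈ Ei i then md e else 0)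
              (fun i _ => Nat.zero_le _) (Finset.mem_univ i₀)
    _ = ∑ i : Fin (arboricity G), ∑ e ∈ G.edgeFinset, if e ∈ Ei i then md e else 0 :=
        Finset.sum_comm
    _ = ∑ i : Fin (arboricity G), ∑ e ∈ Ei i, md e := by
        refine Finset.sum_congr rfl fun i _ => ?_
        rw [Finset.sum_ite_mem, Finset.inter_eq_right.mpr (hEsub i)]
    _ ≤ ∑ _i : Fin (arboricity G), 2 * G.edgeFinset.card :=
        Finset.sum_le_sum fun i _ => hforest i
    _ = arboricity G * (2 * G.edgeFinset.card) := by
        rw [Finset.sum_const, Finset.card_univ, Fintype.card_fin, smul_eq_mul]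
    _ = 2 * arboricity G * G.edgeFinset.card := by ring
end

section
/- (Nash-Williams) For any finite simple graph G, the arboricity α(G) equals the maximum over all subgraphs S of G with at least 2 vertices of ⌈|E(S)| / (|V(S)| - 1)⌉. -/
/-!
A forest has fewer edges than vertices, so `k` forests covering `G` contain at most
`k (|U| - 1)` edges inside any vertex set `U`; this is the inequality `≥`.

For `≤`, let `k` be the maximum and take `k` edge-disjoint forests of `G` with as many edges
as possible. Suppose an edge `x₀y₀` of `G` is left over. By maximality `x₀` and `y₀` are
connected in every forest, and exchanging `x₀y₀` against any edge `uv` of the `x₀`–`y₀` path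
in one forest gives another maximum family, now missing `uv`. Let `U` be the set of endpoints
of all edges reachable by repeated exchanges. Every edge inside `U` created by an exchange joins
two vertices that were already connected inside `U` in the original forest, and all of `U` is
connected to `x₀` through such edges. Hence each original forest is connected on `U`, has at
least `|U| - 1` edges there, and with `x₀y₀` the graph has more than `k (|U| - 1)` edges
inside `U`, a contradiction.
-/

open SimpleGraph

open scoped Function

theorem Set.sum_ncard_lt_ncard_of_pairwise_disjoint {ι α : Type*} [Fintype ι] [Finite α]
    {s : ι → Set α} {t : Set α} (hs : Pairwise (Disjoint on s)) (hst : ∀ i, s i ⊆ t) {a : α}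
    (ha : a ∈ t) (has : ∀ i, a ∉ s i) : ∑ i, (s i).ncard < t.ncard := by
  rw [← finsum_eq_sum_of_fintype, ← Set.ncard_iUnion_of_finite (fun _ => Set.toFinite _) hs]
  exact Set.ncard_lt_ncard ((Set.ssubset_iff_of_subset (Set.iUnion_subset hst)).2
    ⟨a, ha, by simpa using has⟩)

theorem ceil_div_sub_one_le_iff {a n k : ℕ} (hn : 2 ≤ n) :
    ⌈(a : ℚ) / ((n : ℚ) - 1)⌉ ≤ k ↔ a ≤ k * (n - 1) := by
  have hpos : (0 : ℚ) < (n : ℚ) - 1 := by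
    have : (2 : ℚ) ≤ n := by exact_mod_cast hn
    linarith
  rw [Int.ceil_le, div_le_iff₀ hpos, ← Nat.cast_pred (by omega), Int.cast_natCast]
  exact_mod_cast Iff.rfl

namespace SimpleGraph

variable {V : Type*} {G : SimpleGraph V} {x y : V}

theorem Walk.reachable_of_mem_support {H : SimpleGraph V} {u v w : V} (p : G.Walk u v)
    (h : ∀ a b, s(a, b) ∈ p.edges → H.Reachable a b) (hw : w ∈ p.support) :
    H.Reachable u w := by
  induction p with
  | nil => rw [Walk.mem_support_nil_iff.1 hw]
  | cons hadj p ih =>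
    rcases List.mem_cons.1 (Walk.support_cons _ _ ▸ hw) with rfl | hw
    · rfl
    · exact (h _ _ (by simp)).trans (ih (fun a b hab => h a b (by simp [hab])) hw)

theorem IsAcyclic.not_reachable_deleteEdges_of_mem_edges (hG : G.IsAcyclic)
    {P : G.Walk x y} (hP : P.IsPath) {e : Sym2 V} (he : e ∈ P.edges) :
    ¬(G.deleteEdges {e}).Reachable x y := by
  intro hr
  obtain ⟨Q, hQ⟩ := hr.exists_isPath
  have hPQ : P = Q.mapLe (G.deleteEdges_le _) :=
    congrArg Subtype.val ((hG.subsingleton_path x y).elim ⟨P, hP⟩ ⟨_, hQ.mapLe _⟩)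
  rw [hPQ, Walk.edges_mapLe_eq_edges] at he
  simpa using Q.edges_subset_edgeSet he

theorem IsAcyclic.deleteEdges_sup_edge (hG : G.IsAcyclic) {P : G.Walk x y}
    (hP : P.IsPath) {e : Sym2 V} (he : e ∈ P.edges) : (G.deleteEdges {e} ⊔ edge x y).IsAcyclic :=
  (hG.anti (G.deleteEdges_le _)).sup_edge_of_not_reachable
    (hG.not_reachable_deleteEdges_of_mem_edges hP he)

theorem IsAcyclic.card_edgeSet_add_one_le [Finite V] [Nonempty V] (hG : G.IsAcyclic) :
    Nat.card G.edgeSet + 1 ≤ Nat.card V := by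
  obtain ⟨T, hGT, hT⟩ := (⊤ : SimpleGraph V).exists_maximal_isAcyclic_of_le_isAcyclic le_top hG
  rw [← (isTree_iff_connected_and_card.1
    ((connected_top.maximal_le_isAcyclic_iff_isTree le_top).1 hT)).2]
  gcongr
  exact Nat.card_mono (Set.toFinite _) (edgeSet_mono hGT)

theorem ncard_edgeSet_inter_sym2 (G : SimpleGraph V) (U : Set V) :
    (G.edgeSet ∩ U.sym2).ncard = Nat.card (G.induce U).edgeSet := by
  have : G.edgeSet ∩ U.sym2 = Sym2.map (↑) '' (G.induce U).edgeSet := by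
    ext e
    induction e using Sym2.ind with | h x y => ?_
    refine ⟨fun ⟨h, hx, hy⟩ => ⟨s(⟨x, hx⟩, ⟨y, hy⟩), h, rfl⟩, ?_⟩
    rintro ⟨e, he, hxy⟩
    induction e using Sym2.ind with | h a b => ?_
    rw [← hxy]
    exact ⟨he, a.2, b.2⟩
  rw [this, Set.ncard_image_of_injective _ (Sym2.map.injective Subtype.val_injective),
    Nat.card_coe_set_eq]

theorem IsAcyclic.ncard_edgeSet_inter_sym2_lt (hG : G.IsAcyclic) {U : Set V} (hU : U.Finite)
    (hne : U.Nonempty) : (G.edgeSet ∩ U.sym2).ncard < U.ncard := by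
  have := hU.to_subtype
  have := hne.to_subtype
  rw [ncard_edgeSet_inter_sym2, ← Nat.card_coe_set_eq]
  exact (hG.induce U).card_edgeSet_add_one_le

theorem Connected.ncard_le_ncard_edgeSet_inter_sym2_add_one {U : Set V}
    (h : (G.induce U).Connected) : U.ncard ≤ (G.edgeSet ∩ U.sym2).ncard + 1 := by
  rw [ncard_edgeSet_inter_sym2, ← Nat.card_coe_set_eq]
  exact h.card_vert_le_card_edgeSet_add_one

theorem Walk.reachable_induce_of_deleteEdges_compl_sym2 {U : Set V} {a b : V}
    (p : (G.deleteEdges U.sym2ᶜ).Walk a b) (ha : a ∈ U) (hb : b ∈ U) :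
    (G.induce U).Reachable ⟨a, ha⟩ ⟨b, hb⟩ := by
  induction p with
  | nil => rfl
  | cons hadj p ih =>
    obtain ⟨hadj, hmem⟩ := deleteEdges_adj.1 hadj
    have hc : _ ∈ U := (Set.mk_mem_sym2_iff.1 (not_not.1 hmem)).2
    exact (Adj.reachable (G := G.induce U) (u := ⟨_, ha⟩) (v := ⟨_, hc⟩) hadj).trans (ih hc hb)

theorem induce_connected_of_forall_reachable_deleteEdges {U : Set V} (hne : U.Nonempty)
    (h : ∀ a ∈ U, ∀ b ∈ U, (G.deleteEdges U.sym2ᶜ).Reachable a b) : (G.induce U).Connected := by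
  have := hne.to_subtype
  refine (connected_iff _).2 ⟨fun ⟨a, ha⟩ ⟨b, hb⟩ => ?_, inferInstance⟩
  obtain ⟨p⟩ := h a ha b hb
  exact p.reachable_induce_of_deleteEdges_compl_sym2 ha hb

theorem ncard_edgeSet_sup_edge [Finite V] {H : SimpleGraph V} (hxy : ¬H.Adj x y) (hne : x ≠ y) :
    (H ⊔ edge x y).edgeSet.ncard = H.edgeSet.ncard + 1 := by
  rw [edgeSet_sup, edgeSet_edge_of_ne hne, Set.union_singleton,
    Set.ncard_insert_of_notMem (show s(x, y) ∉ H.edgeSet from hxy)]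

theorem ncard_edgeSet_deleteEdges_sup_edge [Finite V] {H : SimpleGraph V} {u v : V}
    (huv : H.Adj u v) (hxy : ¬H.Adj x y) (hne : x ≠ y) :
    (H.deleteEdges {s(u, v)} ⊔ edge x y).edgeSet.ncard = H.edgeSet.ncard := by
  rw [ncard_edgeSet_sup_edge (fun h => hxy (deleteEdges_le _ h)) hne, edgeSet_deleteEdges,
    Set.ncard_sdiff_singleton_add_one (show s(u, v) ∈ H.edgeSet from huv)]

theorem Subgraph.edgeSet_subset_inter_sym2 (S : G.Subgraph) :
    S.edgeSet ⊆ G.edgeSet ∩ S.verts.sym2 :=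
  Sym2.ind (fun _ _ h => ⟨S.adj_sub h, S.edge_vert h, S.edge_vert h.symm⟩)

theorem Subgraph.edgeSet_induce_top (U : Set V) :
    ((⊤ : G.Subgraph).induce U).edgeSet = G.edgeSet ∩ U.sym2 := by
  ext e
  induction e using Sym2.ind with | h x y => ?_
  simpa using and_rotate.symm

section ForestPacking

variable {ι : Type*} {F : ι → SimpleGraph V}

def IsForestCover (G : SimpleGraph V) (F : ι → SimpleGraph V) : Prop :=
  (∀ i, (F i).IsAcyclic) ∧ (∀ i, F i ≤ G) ∧ ∀ e ∈ G.edgeSet, ∃ i, e ∈ (F i).edgeSet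

theorem IsForestCover.ncard_edgeSet_inter_sym2_le [Finite V] [Fintype ι]
    (hF : IsForestCover G F) {U : Set V} (hne : U.Nonempty) :
    (G.edgeSet ∩ U.sym2).ncard ≤ Fintype.card ι * (U.ncard - 1) := by
  have hcover : G.edgeSet ∩ U.sym2 ⊆ ⋃ i, (F i).edgeSet ∩ U.sym2 := fun e ⟨he, heU⟩ =>
    have ⟨i, hi⟩ := hF.2.2 e he
    Set.mem_iUnion.2 ⟨i, hi, heU⟩
  calc (G.edgeSet ∩ U.sym2).ncard ≤ (⋃ i, (F i).edgeSet ∩ U.sym2).ncard :=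
        Set.ncard_le_ncard hcover (Set.toFinite _)
    _ ≤ ∑ i, ((F i).edgeSet ∩ U.sym2).ncard := Set.ncard_iUnion_le_of_fintype _
    _ ≤ ∑ _i : ι, (U.ncard - 1) := Finset.sum_le_sum fun i _ =>
        Nat.le_sub_one_of_lt ((hF.1 i).ncard_edgeSet_inter_sym2_lt (Set.toFinite U) hne)
    _ = Fintype.card ι * (U.ncard - 1) := by simp

structure IsForestPacking (G : SimpleGraph V) (F : ι → SimpleGraph V) : Prop where
  isAcyclic (i : ι) : (F i).IsAcyclic
  le (i : ι) : F i ≤ G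
  pairwise_disjoint : Pairwise (Disjoint on F)

noncomputable def totalEdges [Fintype ι] (F : ι → SimpleGraph V) : ℕ :=
  ∑ i, (F i).edgeSet.ncard

structure IsMaxForestPacking [Fintype ι] (G : SimpleGraph V) (F : ι → SimpleGraph V) :
    Prop where
  isForestPacking : IsForestPacking G F
  totalEdges_le ⦃F' : ι → SimpleGraph V⦄ : IsForestPacking G F' → totalEdges F' ≤ totalEdges F

theorem exists_isMaxForestPacking [Finite V] [Fintype ι] (G : SimpleGraph V) :
    ∃ F : ι → SimpleGraph V, IsMaxForestPacking G F := by
  have hbot : IsForestPacking G fun _ : ι => (⊥ : SimpleGraph V) :=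
    ⟨fun _ => isAcyclic_bot, fun _ => bot_le, fun _ _ _ => disjoint_bot_left⟩
  obtain ⟨F, hF, hmax⟩ := Set.exists_max_image {F | IsForestPacking G F} totalEdges
    (Set.toFinite _) ⟨_, hbot⟩
  exact ⟨F, hF, hmax⟩

structure IsUncoveredEdge (G : SimpleGraph V) (F : ι → SimpleGraph V) (x y : V) : Prop where
  adj : G.Adj x y
  not_adj (i : ι) : ¬(F i).Adj x y

variable [DecidableEq ι]

theorem totalEdges_update [Fintype ι] (F : ι → SimpleGraph V) (i : ι) (H : SimpleGraph V) :
    totalEdges (Function.update F i H) + (F i).edgeSet.ncard =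
      totalEdges F + H.edgeSet.ncard := by
  simp only [totalEdges, Function.apply_update (fun _ (K : SimpleGraph V) => K.edgeSet.ncard),
    Finset.sum_update_of_mem (Finset.mem_univ i), ← Finset.add_sum_erase _ _ (Finset.mem_univ i),
    Finset.sdiff_singleton_eq_erase]
  ring

theorem IsForestPacking.update (hF : IsForestPacking G F) (hxy : IsUncoveredEdge G F x y)
    {i : ι} {H : SimpleGraph V} (hH : H.IsAcyclic) (hle : H ≤ F i ⊔ edge x y) :
    IsForestPacking G (Function.update F i H) := by
  have hdisj : ∀ j ≠ i, Disjoint H (F j) := fun j hj =>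
    (disjoint_sup_left.2 ⟨hF.pairwise_disjoint hj.symm,
      ((F j).disjoint_edge.2 (hxy.not_adj j)).symm⟩).mono_left hle
  refine ⟨fun j => ?_, fun j => ?_, fun a b hab => ?_⟩
  · rcases eq_or_ne j i with rfl | hj
    · simpa using hH
    · simpa [hj] using hF.isAcyclic j
  · rcases eq_or_ne j i with rfl | hj
    · simpa using hle.trans (sup_le (hF.le j) ((edge_le_iff _).2 (Or.inr hxy.adj)))
    · simpa [hj] using hF.le j
  · rcases eq_or_ne a i with rfl | ha
    · simpa [Function.onFun, hab.symm] using hdisj b hab.symm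
    · rcases eq_or_ne b i with rfl | hb
      · simpa [Function.onFun, ha] using (hdisj a ha).symm
      · simpa [Function.onFun, ha, hb] using hF.pairwise_disjoint hab

def exchange (F : ι → SimpleGraph V) (i : ι) (x y u v : V) : ι → SimpleGraph V :=
  Function.update F i ((F i).deleteEdges {s(u, v)} ⊔ edge x y)

inductive ExchangeReach (F : ι → SimpleGraph V) (x₀ y₀ : V) :
    (ι → SimpleGraph V) → V → V → Prop
  | refl : ExchangeReach F x₀ y₀ F x₀ y₀
  | step {f : ι → SimpleGraph V} {x y : V} (h : ExchangeReach F x₀ y₀ f x y) (i : ι)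
      {P : (f i).Walk x y} (hP : P.IsPath) {u v : V} (huv : s(u, v) ∈ P.edges) :
      ExchangeReach F x₀ y₀ (exchange f i x y u v) u v

def exchangeVerts (F : ι → SimpleGraph V) (x₀ y₀ : V) : Set V :=
  {a | ∃ f x y, ExchangeReach F x₀ y₀ f x y ∧ (a = x ∨ a = y)}

namespace ExchangeReach

variable {x₀ y₀ : V} {f : ι → SimpleGraph V}

theorem left_mem (h : ExchangeReach F x₀ y₀ f x y) : x ∈ exchangeVerts F x₀ y₀ :=
  ⟨f, x, y, h, .inl rfl⟩

theorem right_mem (h : ExchangeReach F x₀ y₀ f x y) : y ∈ exchangeVerts F x₀ y₀ :=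
  ⟨f, x, y, h, .inr rfl⟩

theorem mem_of_mem_edges (h : ExchangeReach F x₀ y₀ f x y) {i : ι} {P : (f i).Walk x y}
    (hP : P.IsPath) {a b : V} (hab : s(a, b) ∈ P.edges) :
    a ∈ exchangeVerts F x₀ y₀ ∧ b ∈ exchangeVerts F x₀ y₀ :=
  ⟨(h.step i hP hab).left_mem, (h.step i hP hab).right_mem⟩

theorem reachable_of_adj (h : ExchangeReach F x₀ y₀ f x y) (j : ι) {a b : V}
    (ha : a ∈ exchangeVerts F x₀ y₀) (hb : b ∈ exchangeVerts F x₀ y₀) (hab : (f j).Adj a b) :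
    ((F j).deleteEdges (exchangeVerts F x₀ y₀).sym2ᶜ).Reachable a b := by
  induction h generalizing a b with
  | refl => exact (deleteEdges_adj.2 ⟨hab, by simp [ha, hb]⟩).reachable
  | @step f x y h i P hP u v huv ih =>
    rcases eq_or_ne j i with rfl | hj
    · rcases (by simpa [exchange] using hab : ((f j).Adj a b ∧ _) ∨ (edge x y).Adj a b)
        with ⟨hab, -⟩ | hab
      · exact ih ha hb hab
      have hxy := P.reachable_of_mem_support (fun c d hcd =>
        ih (h.mem_of_mem_edges hP hcd).1 (h.mem_of_mem_edges hP hcd).2 (P.adj_of_mem_edges hcd))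
        P.end_mem_support
      rcases (edge_adj ..).1 hab with ⟨⟨rfl, rfl⟩ | ⟨rfl, rfl⟩, -⟩
      exacts [hxy, hxy.symm]
    · exact ih ha hb (by simpa [exchange, hj] using hab)

end ExchangeReach

variable [Finite V] [Fintype ι]

theorem IsMaxForestPacking.reachable (hF : IsMaxForestPacking G F)
    (hxy : IsUncoveredEdge G F x y) (i : ι) : (F i).Reachable x y := by
  by_contra hr
  have hpack := hF.isForestPacking.update hxy
    ((hF.isForestPacking.isAcyclic i).sup_edge_of_not_reachable hr) le_rfl
  have hsize := totalEdges_update F i (F i ⊔ edge x y)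
  rw [ncard_edgeSet_sup_edge (hxy.not_adj i) hxy.adj.ne] at hsize
  have := hF.totalEdges_le hpack
  omega

theorem IsMaxForestPacking.exchange (hF : IsMaxForestPacking G F)
    (hxy : IsUncoveredEdge G F x y) {i : ι} {P : (F i).Walk x y} (hP : P.IsPath) {u v : V}
    (huv : s(u, v) ∈ P.edges) :
    IsMaxForestPacking G (exchange F i x y u v) ∧ IsUncoveredEdge G (exchange F i x y u v) u v := by
  have hFuv : (F i).Adj u v := P.adj_of_mem_edges huv
  have hpack := hF.isForestPacking.update hxy
    ((hF.isForestPacking.isAcyclic i).deleteEdges_sup_edge hP huv)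
    (sup_le_sup_right (deleteEdges_le _) _)
  have hsize := totalEdges_update F i ((F i).deleteEdges {s(u, v)} ⊔ edge x y)
  rw [ncard_edgeSet_deleteEdges_sup_edge hFuv (hxy.not_adj i) hxy.adj.ne] at hsize
  refine ⟨⟨hpack, fun F' hF' => ?_⟩, ⟨hF.isForestPacking.le i hFuv, fun j => ?_⟩⟩
  · have := hF.totalEdges_le hF'
    unfold SimpleGraph.exchange
    omega
  · rcases eq_or_ne j i with rfl | hj
    · simp only [SimpleGraph.exchange, Function.update_self, sup_adj, deleteEdges_adj,
        Set.mem_singleton_iff, not_true_eq_false, and_false, adj_edge, false_or, not_and]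
      intro hxyuv _
      exact (hxy.not_adj j) (by rwa [← mem_edgeSet, hxyuv])
    · simpa [SimpleGraph.exchange, hj] using
        fun h => (hF.isForestPacking.pairwise_disjoint hj.symm).le_bot ⟨hFuv, h⟩

namespace ExchangeReach

variable {x₀ y₀ : V} {f : ι → SimpleGraph V}

theorem isMaxForestPacking (hF : IsMaxForestPacking G F) (h₀ : IsUncoveredEdge G F x₀ y₀)
    (h : ExchangeReach F x₀ y₀ f x y) : IsMaxForestPacking G f ∧ IsUncoveredEdge G f x y := by
  induction h with
  | refl => exact ⟨hF, h₀⟩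
  | step _ i hP huv ih => exact ih.1.exchange ih.2 hP huv

theorem reachable (hF : IsMaxForestPacking G F) (h₀ : IsUncoveredEdge G F x₀ y₀)
    (h : ExchangeReach F x₀ y₀ f x y) (j : ι) :
    ((F j).deleteEdges (exchangeVerts F x₀ y₀).sym2ᶜ).Reachable x y := by
  obtain ⟨hf, hxy⟩ := h.isMaxForestPacking hF h₀
  obtain ⟨P, hP⟩ := (hf.reachable hxy j).exists_isPath
  exact P.reachable_of_mem_support (fun a b hab => h.reachable_of_adj j
    (h.mem_of_mem_edges hP hab).1 (h.mem_of_mem_edges hP hab).2 (P.adj_of_mem_edges hab))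
    P.end_mem_support

theorem reachable_from_start (hF : IsMaxForestPacking G F) (h₀ : IsUncoveredEdge G F x₀ y₀)
    (h : ExchangeReach F x₀ y₀ f x y) (j : ι) :
    ((F j).deleteEdges (exchangeVerts F x₀ y₀).sym2ᶜ).Reachable x₀ x ∧
      ((F j).deleteEdges (exchangeVerts F x₀ y₀).sym2ᶜ).Reachable x₀ y := by
  induction h with
  | refl => exact ⟨.rfl, refl.reachable hF h₀ j⟩
  | @step f x y h i P hP u v huv ih =>
    have hP' := fun a b (hab : s(a, b) ∈ P.edges) => (h.step i hP hab).reachable hF h₀ j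
    exact ⟨ih.1.trans (P.reachable_of_mem_support hP' (P.fst_mem_support_of_mem_edges huv)),
      ih.1.trans (P.reachable_of_mem_support hP' (P.snd_mem_support_of_mem_edges huv))⟩

end ExchangeReach

theorem IsMaxForestPacking.exists_ncard_lt (hF : IsMaxForestPacking G F) {x₀ y₀ : V}
    (h₀ : IsUncoveredEdge G F x₀ y₀) :
    ∃ U : Set V, 2 ≤ U.ncard ∧ Fintype.card ι * (U.ncard - 1) < (G.edgeSet ∩ U.sym2).ncard := by
  set U := exchangeVerts F x₀ y₀
  have hx₀ : x₀ ∈ U := ExchangeReach.refl.left_mem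
  have hy₀ : y₀ ∈ U := ExchangeReach.refl.right_mem
  have hconn (j : ι) : ((F j).induce U).Connected := by
    have hstart : ∀ a ∈ U, ((F j).deleteEdges U.sym2ᶜ).Reachable x₀ a := by
      rintro a ⟨f, x, y, h, rfl | rfl⟩
      exacts [(h.reachable_from_start hF h₀ j).1, (h.reachable_from_start hF h₀ j).2]
    exact induce_connected_of_forall_reachable_deleteEdges ⟨x₀, hx₀⟩
      fun a ha b hb => (hstart a ha).symm.trans (hstart b hb)
  refine ⟨U, (Set.one_lt_ncard_iff (Set.toFinite U)).2 ⟨x₀, y₀, hx₀, hy₀, h₀.adj.ne⟩, ?_⟩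
  calc Fintype.card ι * (U.ncard - 1) = ∑ _j : ι, (U.ncard - 1) := by simp
    _ ≤ ∑ j, ((F j).edgeSet ∩ U.sym2).ncard := Finset.sum_le_sum fun j _ =>
        Nat.sub_le_of_le_add (hconn j).ncard_le_ncard_edgeSet_inter_sym2_add_one
    _ < (G.edgeSet ∩ U.sym2).ncard :=
        Set.sum_ncard_lt_ncard_of_pairwise_disjoint
          (fun a b hab => (disjoint_edgeSet.2 (hF.isForestPacking.pairwise_disjoint hab)).mono
            Set.inter_subset_left Set.inter_subset_left)
          (fun j => Set.inter_subset_inter_left _ (edgeSet_mono (hF.isForestPacking.le j)))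
          (a := s(x₀, y₀)) ⟨h₀.adj, hx₀, hy₀⟩ (fun j h => h₀.not_adj j h.1)

theorem exists_isForestCover_of_forall_ncard_le
    (h : ∀ U : Set V, 2 ≤ U.ncard →
      (G.edgeSet ∩ U.sym2).ncard ≤ Fintype.card ι * (U.ncard - 1)) :
    ∃ F : ι → SimpleGraph V, IsForestCover G F := by
  obtain ⟨F, hF⟩ := exists_isMaxForestPacking (ι := ι) G
  refine ⟨F, hF.isForestPacking.isAcyclic, hF.isForestPacking.le, Sym2.ind fun x₀ y₀ he => ?_⟩
  by_contra! hunc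
  obtain ⟨U, hU, hlt⟩ := hF.exists_ncard_lt ⟨he, hunc⟩
  exact (h U hU).not_gt hlt

end ForestPacking

theorem arboricity_le {n : ℕ} {F : Fin n → SimpleGraph V} (hF : IsForestCover G F) :
    arboricity G ≤ n :=
  Nat.sInf_le ⟨F, hF⟩

theorem exists_isForestCover_arboricity [Finite V] (G : SimpleGraph V) :
    ∃ F : Fin (arboricity G) → SimpleGraph V, IsForestCover G F :=
  Nat.sInf_mem (s := {n | ∃ F : Fin n → SimpleGraph V, IsForestCover G F})
    ⟨_, exists_isForestCover_of_forall_ncard_le (ι := Fin G.edgeSet.ncard) fun U hU => by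
      rw [Fintype.card_fin]
      calc (G.edgeSet ∩ U.sym2).ncard ≤ G.edgeSet.ncard :=
            Set.ncard_le_ncard Set.inter_subset_left (Set.toFinite _)
        _ ≤ G.edgeSet.ncard * (U.ncard - 1) := Nat.le_mul_of_pos_right _ (by omega)⟩

def nashWilliamsValues (G : SimpleGraph V) : Set ℕ :=
  {k : ℕ | ∃ S : G.Subgraph, 2 ≤ S.verts.ncard ∧
    k = ⌈(S.edgeSet.ncard : ℚ) / ((S.verts.ncard : ℚ) - 1)⌉}

theorem mem_upperBounds_nashWilliamsValues [Finite V] {k : ℕ} :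
    k ∈ upperBounds (nashWilliamsValues G) ↔
      ∀ U : Set V, 2 ≤ U.ncard → (G.edgeSet ∩ U.sym2).ncard ≤ k * (U.ncard - 1) := by
  refine ⟨fun hk U hU => ?_, fun hk k' ⟨S, hS, hk'⟩ => ?_⟩
  · have hceil : 0 ≤ ⌈((G.edgeSet ∩ U.sym2).ncard : ℚ) / ((U.ncard : ℚ) - 1)⌉ :=
      Int.ceil_nonneg (div_nonneg (Nat.cast_nonneg _)
        (sub_nonneg.2 (by exact_mod_cast (by omega : 1 ≤ U.ncard))))
    have : (⌈((G.edgeSet ∩ U.sym2).ncard : ℚ) / ((U.ncard : ℚ) - 1)⌉).toNat ≤ k :=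
      hk ⟨(⊤ : G.Subgraph).induce U, hU, by
        rw [Subgraph.edgeSet_induce_top]; exact Int.toNat_of_nonneg hceil⟩
    rw [← ceil_div_sub_one_le_iff hU]
    omega
  · have := (ceil_div_sub_one_le_iff hS).2
      ((Set.ncard_le_ncard S.edgeSet_subset_inter_sym2 (Set.toFinite _)).trans (hk _ hS))
    omega

end SimpleGraph

/-- Nash-Williams: the arboricity of a finite simple graph equals the maximum over
subgraphs `S` with at least two vertices of `⌈|E(S)| / (|V(S)| - 1)⌉`. -/
theorem arboricity_eq_nashWilliams {V : Type*} [Fintype V] (G : SimpleGraph V) :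
    arboricity G =
      sSup {k : ℕ | ∃ S : G.Subgraph, 2 ≤ S.verts.ncard ∧
        k = ⌈(S.edgeSet.ncard : ℚ) / ((S.verts.ncard : ℚ) - 1)⌉} := by
  obtain ⟨F, hF⟩ := exists_isForestCover_arboricity G
  have hub : arboricity G ∈ upperBounds (nashWilliamsValues G) :=
    mem_upperBounds_nashWilliamsValues.2 fun U hU => by
      simpa using hF.ncard_edgeSet_inter_sym2_le (Set.nonempty_of_ncard_ne_zero (by omega))
  refine le_antisymm ?_ (csSup_le' hub)
  obtain ⟨F', hF'⟩ := exists_isForestCover_of_forall_ncard_le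
    (ι := Fin (sSup (nashWilliamsValues G))) (G := G) (by
      simpa using mem_upperBounds_nashWilliamsValues.1 fun k hk => le_csSup ⟨_, hub⟩ hk)
  exact arboricity_le hF'
end

section
/- Let α̂ : ℕ → ℕ⁺ be a monotonically increasing function. For every m ∈ ℕ there exists a simple graph G with exactly m edges, arboricity at most α̂(m), and at least (2/3)·m·α̂(m) − (2/3)·m − (4/3)·α̂(m)³ − (2/3)·α̂(m)² triangles. -/
/-!
The complete graph `K_{2a}` is the union of `a` double stars, so every disjoint union of
copies of `K_{2a}` has arboricity at most `a`. With `n = ⌊m / C(2a,2)⌋` copies, topped up to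
exactly `m` edges inside one further copy, there are at least
`n · C(2a,3) = (2/3)(a - 1) · n · C(2a,2)` triangles; the remainder `m - n · C(2a,2) < C(2a,2)`
costs only `O(a³)` of them.
-/

open SimpleGraph

open Finset

namespace SimpleGraph

variable {V W ι κ β : Type*}

structure IsForestRanking [LinearOrder β] (G : SimpleGraph V) (g : V → β) : Prop where
  ne_of_adj : ∀ ⦃u v⦄, G.Adj u v → g u ≠ g v
  eq_of_adj_of_lt : ∀ ⦃v u w⦄, G.Adj v u → G.Adj v w → g v < g u → g v < g w → u = w

namespace IsForestRanking

variable [LinearOrder β] {G : SimpleGraph V} {g : V → β}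

theorem isAcyclic (hg : G.IsForestRanking g) : G.IsAcyclic := by
  classical
  intro v c hc
  obtain ⟨x, hx, hmin⟩ := c.support.toFinset.exists_min_image g ⟨v, by simp⟩
  rw [List.mem_toFinset] at hx
  set c' := c.rotate x hx
  have hc' : c'.IsCycle := hc.rotate hx
  have hmin' : ∀ u ∈ c'.support, g x ≤ g u := fun u hu =>
    hmin u (List.mem_toFinset.2 ((c.mem_support_rotate_iff x hx).1 hu))
  have hnil : ¬ c'.Nil := hc'.not_nil
  have hsnd : G.Adj x c'.snd := c'.adj_snd hnil
  have hpen : G.Adj x c'.penultimate := (c'.adj_penultimate hnil).symm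
  -- the vertex of least rank on a cycle has two distinct neighbours of higher rank
  have hsnd_lt : g x < g c'.snd :=
    (hmin' _ (List.mem_of_mem_tail (c'.snd_mem_tail_support hnil))).lt_of_ne (hg.ne_of_adj hsnd)
  have hpen_lt : g x < g c'.penultimate :=
    (hmin' _ (List.mem_of_mem_dropLast (c'.penultimate_mem_dropLast_support hnil))).lt_of_ne
      (hg.ne_of_adj hpen)
  exact hc'.snd_ne_penultimate (hg.eq_of_adj_of_lt hsnd hpen hsnd_lt hpen_lt)

theorem bot_boxProd (hg : G.IsForestRanking g) :
    ((⊥ : SimpleGraph ι) □ G).IsForestRanking (g ∘ Prod.snd) where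
  ne_of_adj u v h := by
    simp only [boxProd_adj, bot_adj, false_and, false_or] at h
    exact hg.ne_of_adj h.1
  eq_of_adj_of_lt v u w hu hw hgu hgw := by
    simp only [boxProd_adj, bot_adj, false_and, false_or] at hu hw
    exact Prod.ext (hu.2.symm.trans hw.2) (hg.eq_of_adj_of_lt hu.1 hw.1 hgu hgw)

end IsForestRanking

/-- For `i < a`: the stars from `i` and from `i + a` to the next `a` vertices in the cyclic
order of `Fin (2 * a)`. -/
def doubleStar (a i : ℕ) : SimpleGraph (Fin (2 * a)) := fromRel fun x y =>
  (x.val = i ∧ i < y.val ∧ y.val ≤ i + a) ∨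
    (x.val = i + a ∧ (i + a < y.val ∨ y.val ≤ i))

theorem isForestRanking_doubleStar (a i : ℕ) :
    (doubleStar a i).IsForestRanking
      fun x => if x.val = i then 2 else if x.val = i + a then 1 else 0 where
  ne_of_adj u v h := by
    simp only [doubleStar, fromRel_adj, ne_eq, Fin.ext_iff] at h
    split_ifs <;> omega
  eq_of_adj_of_lt v u w hu hw hgu hgw := by
    simp only [doubleStar, fromRel_adj, ne_eq, Fin.ext_iff] at hu hw ⊢
    split_ifs at hgu hgw <;> omega

theorem iSup_doubleStar (a : ℕ) : ⨆ i : Fin a, doubleStar a i = ⊤ := by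
  ext x y
  simp only [iSup_adj, doubleStar, fromRel_adj, top_adj, ne_eq]
  refine ⟨fun ⟨_, h, _⟩ => h, fun hxy => ?_⟩
  rw [Fin.ext_iff] at hxy
  have := x.isLt; have := y.isLt
  -- the centre is whichever endpoint the other one follows within `a` steps, cyclically
  rcases lt_or_gt_of_ne hxy with h | h
  · by_cases hyx : y.val ≤ x.val + a
    · by_cases hx : x.val < a
      · exact ⟨⟨x, hx⟩, by simp [Fin.ext_iff]; omega⟩
      · exact ⟨⟨x - a, by omega⟩, by simp [Fin.ext_iff]; omega⟩
    · exact ⟨⟨y - a, by omega⟩, by simp [Fin.ext_iff]; omega⟩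
  · by_cases hxy' : x.val ≤ y.val + a
    · by_cases hy : y.val < a
      · exact ⟨⟨y, hy⟩, by simp [Fin.ext_iff]; omega⟩
      · exact ⟨⟨y - a, by omega⟩, by simp [Fin.ext_iff]; omega⟩
    · exact ⟨⟨x - a, by omega⟩, by simp [Fin.ext_iff]; omega⟩

def HasForestCover (G : SimpleGraph V) (a : ℕ) : Prop :=
  ∃ F : Fin a → SimpleGraph V, (∀ i, (F i).IsAcyclic) ∧ ⨆ i, F i = G

section ForestCover

variable {G H : SimpleGraph V} {a : ℕ}

theorem arboricity_le_of_hasForestCover (h : G.HasForestCover a) : arboricity G ≤ a := by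
  obtain ⟨F, hF, rfl⟩ := h
  refine Nat.sInf_le ⟨F, hF, le_iSup F, fun e he => ?_⟩
  induction e using Sym2.ind
  simpa [iSup_adj] using he

theorem HasForestCover.anti (hGH : G ≤ H) : H.HasForestCover a → G.HasForestCover a
  | ⟨F, hF, hH⟩ => ⟨fun i => F i ⊓ G, fun i => (hF i).anti inf_le_left, by
      rw [← iSup_inf_eq, hH, inf_eq_right.2 hGH]⟩

theorem HasForestCover.map (e : V ≃ W) : G.HasForestCover a → (G.map e).HasForestCover a
  | ⟨F, hF, hG⟩ => ⟨fun i => (F i).map e, fun i => (Iso.map e _).isAcyclic_iff.1 (hF i), by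
      subst hG; ext; simp only [iSup_adj, map_adj']; grind⟩

theorem hasForestCover_bot_boxProd_top (a : ℕ) :
    ((⊥ : SimpleGraph ι) □ (⊤ : SimpleGraph (Fin (2 * a)))).HasForestCover a :=
  ⟨fun i => ⊥ □ doubleStar a i,
    fun i => (isForestRanking_doubleStar a i).bot_boxProd.isAcyclic, by
    rw [← iSup_doubleStar]; ext; simp only [iSup_adj, boxProd_adj, bot_adj]; grind⟩

end ForestCover

section Blocks

variable [Fintype ι] [Fintype κ] [DecidableEq κ]
  [DecidableRel ((⊥ : SimpleGraph ι) □ (⊤ : SimpleGraph κ)).Adj]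

theorem card_edgeFinset_bot_boxProd_top :
    #((⊥ : SimpleGraph ι) □ (⊤ : SimpleGraph κ)).edgeFinset =
      Fintype.card ι * (Fintype.card κ).choose 2 := by
  have hsum := sum_degrees_eq_twice_card_edges ((⊥ : SimpleGraph ι) □ (⊤ : SimpleGraph κ))
  simp only [degree_boxProd, bot_degree, complete_graph_degree, zero_add, Finset.sum_const,
    Finset.card_univ, Fintype.card_prod, smul_eq_mul] at hsum
  rw [Nat.choose_two_right, ← Nat.mul_right_inj two_ne_zero, ← hsum, mul_left_comm,
    Nat.mul_div_cancel' (Nat.even_mul_pred_self _).two_dvd, mul_assoc]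

theorem card_mul_choose_three_le_card_cliqueFinset_bot_boxProd_top [DecidableEq ι] :
    Fintype.card ι * (Fintype.card κ).choose 3 ≤
      #(((⊥ : SimpleGraph ι) □ (⊤ : SimpleGraph κ)).cliqueFinset 3) := by
  rw [← Finset.card_univ, ← Finset.card_univ (α := κ), ← Finset.card_powersetCard,
    ← Finset.card_product]
  refine Finset.card_le_card_of_injOn (fun p => p.2.map (Function.Embedding.sectR p.1 κ))
    (fun p hp => ?_) (fun p hp q hq hpq => ?_)
  · rw [Finset.mem_coe, Finset.mem_product, Finset.mem_powersetCard] at hp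
    rw [Finset.mem_coe, mem_cliqueFinset_iff, isNClique_iff, Finset.card_map, hp.2.2]
    refine ⟨?_, rfl⟩
    intro x hx y hy hxy
    simp only [Finset.coe_map, Set.mem_image, Finset.mem_coe,
      Function.Embedding.sectR_apply] at hx hy
    obtain ⟨x, -, rfl⟩ := hx
    obtain ⟨y, -, rfl⟩ := hy
    simpa [boxProd_adj] using hxy
  · obtain ⟨i, s⟩ := p
    obtain ⟨j, t⟩ := q
    simp only [Finset.coe_product, Set.mem_prod, Finset.mem_coe, Finset.mem_powersetCard] at hp
    change s.map _ = t.map _ at hpq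
    obtain ⟨x, hx⟩ := Finset.card_pos.1 (hp.2.2.symm ▸ three_pos)
    have hij : i = j := by
      have := Finset.mem_map_of_mem (Function.Embedding.sectR i κ) hx
      rw [hpq] at this
      simp only [Finset.mem_map, Function.Embedding.sectR_apply, Prod.mk.injEq] at this
      exact this.elim fun _ h => h.2.1.symm
    subst hij
    simp only [Finset.map_inj] at hpq
    rw [hpq]

end Blocks

theorem exists_le_le_card_edgeFinset_eq [Fintype V] [DecidableEq V] {L H : SimpleGraph V}
    [DecidableRel L.Adj] [DecidableRel H.Adj] {m : ℕ} (hLH : L ≤ H) (hL : #L.edgeFinset ≤ m)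
    (hH : m ≤ #H.edgeFinset) :
    ∃ (G : SimpleGraph V) (_ : DecidableRel G.Adj),
      L ≤ G ∧ G ≤ H ∧ #G.edgeFinset = m := by
  obtain ⟨s, hLs, hsH, hs⟩ := Finset.exists_subsuperset_card_eq (edgeFinset_mono hLH) hL hH
  have hsH' : (s : Set (Sym2 V)) ⊆ H.edgeSet := by simpa using Finset.coe_subset.2 hsH
  have hG : (fromEdgeSet (s : Set (Sym2 V))).edgeSet = s := by
    rw [edgeSet_fromEdgeSet, sdiff_eq_left]
    exact Set.disjoint_left.2 fun e he => H.edgeSet_subset_compl_diagSet (hsH' he)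
  refine ⟨fromEdgeSet s, inferInstance, ?_, ?_, ?_⟩
  · simpa [le_fromEdgeSet_iff] using Finset.coe_subset.2 hLs
  · rw [← edgeSet_subset_edgeSet, hG]
    exact hsH'
  · rw [← hs]
    congr 1
    rw [← Finset.coe_inj, coe_edgeFinset, hG]

/-- `n + 1` disjoint copies of `K_{2a}`, with edges of the last copy deleted down to `m`. -/
theorem exists_card_edgeFinset_eq_hasForestCover (a m : ℕ) (ha : 0 < a) :
    ∃ (N : ℕ) (G : SimpleGraph (Fin N)) (_ : DecidableRel G.Adj), #G.edgeFinset = m ∧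
      G.HasForestCover a ∧ m / (2 * a).choose 2 * (2 * a).choose 3 ≤ #(G.cliqueFinset 3) := by
  classical
  set n := m / (2 * a).choose 2
  have hpos : 0 < (2 * a).choose 2 := Nat.choose_pos (by omega)
  let e := Fintype.equivFin (Fin (n + 1) × Fin (2 * a))
  let L₀ := (⊥ : SimpleGraph (Fin n)) □ (⊤ : SimpleGraph (Fin (2 * a)))
  let f := (Fin.castSuccEmb.prodMap (Function.Embedding.refl _)).trans e.toEmbedding
  let K :=
    ((⊥ : SimpleGraph (Fin (n + 1))) □ (⊤ : SimpleGraph (Fin (2 * a)))).map e.toEmbedding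
  have hLK : L₀.map f ≤ K := by
    rw [map_le_iff_le_comap]
    intro x y h
    refine (map_adj_apply (f := e.toEmbedding) (a := (x.1.castSucc, x.2))
      (b := (y.1.castSucc, y.2))).2 ?_
    simpa [L₀, boxProd_adj] using h
  have hL : #(L₀.map f).edgeFinset ≤ m := by
    rw [card_edgeFinset_map, card_edgeFinset_bot_boxProd_top]
    simpa using Nat.div_mul_le_self m _
  have hK : m ≤ #K.edgeFinset := by
    rw [card_edgeFinset_map, card_edgeFinset_bot_boxProd_top, Fintype.card_fin,
      Fintype.card_fin, mul_comm]
    exact (Nat.lt_mul_div_succ m hpos).le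
  obtain ⟨G, _, hLG, hGK, hG⟩ := exists_le_le_card_edgeFinset_eq hLK hL hK
  refine ⟨_, G, inferInstance, hG, ((hasForestCover_bot_boxProd_top a).map e).anti hGK, ?_⟩
  calc n * (2 * a).choose 3 ≤ #(L₀.cliqueFinset 3) := by
        simpa using card_mul_choose_three_le_card_cliqueFinset_bot_boxProd_top
          (ι := Fin n) (κ := Fin (2 * a))
    _ = #((L₀.map f).cliqueFinset 3) := by rw [cliqueFinset_map _ _ (by norm_num), card_map]
    _ ≤ #(G.cliqueFinset 3) := card_le_card (cliqueFinset_mono _ hLG)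

end SimpleGraph

theorem le_div_choose_two_mul_choose_three (a m : ℕ) (ha : 0 < a) :
    2/3 * m * (a : ℚ) - 2/3 * m - 4/3 * (a : ℚ)^3 - 2/3 * (a : ℚ)^2 ≤
      ((m / (2 * a).choose 2 * (2 * a).choose 3 : ℕ) : ℚ) := by
  obtain ⟨b, rfl⟩ : ∃ b, a = b + 1 := ⟨a - 1, by omega⟩
  set e := (2 * (b + 1)).choose 2
  have he : (e : ℚ) = (b + 1) * (2 * b + 1) := by
    simp only [e, Nat.cast_choose_two]; push_cast; ring
  have h3 : ((2 * (b + 1)).choose 3 : ℚ) * 3 = e * (2 * b) := by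
    exact_mod_cast Nat.choose_succ_right_eq (2 * (b + 1)) 2
  have hm : (m : ℚ) = e * (m / e : ℕ) + (m % e : ℕ) := by
    exact_mod_cast (Nat.div_add_mod m e).symm
  have hr : ((m % e : ℕ) : ℚ) + 1 ≤ e := by
    exact_mod_cast Nat.mod_lt m (Nat.choose_pos (by omega))
  have hb : (0 : ℚ) ≤ b := b.cast_nonneg
  rw [Nat.cast_mul, hm]
  push_cast
  nlinarith [mul_le_mul_of_nonneg_left hr hb]

theorem exists_graph_many_triangles_general (alphaHat : ℕ → ℕ+) (m : ℕ) :
    ∃ (n : ℕ) (G : SimpleGraph (Fin n)) (_ : DecidableRel G.Adj),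
      G.edgeFinset.card = m ∧
      arboricity G ≤ alphaHat m ∧
      ((G.cliqueFinset 3).card : ℚ) ≥
        2/3 * m * (alphaHat m : ℚ) - 2/3 * m - 4/3 * (alphaHat m : ℚ)^3 - 2/3 * (alphaHat m : ℚ)^2 := by
  obtain ⟨N, G, _, hcard, hcover, htri⟩ :=
    exists_card_edgeFinset_eq_hasForestCover (alphaHat m) m (alphaHat m).pos
  refine ⟨N, G, inferInstance, hcard, arboricity_le_of_hasForestCover hcover, ?_⟩
  exact (le_div_choose_two_mul_choose_three _ m (alphaHat m).pos).trans (by exact_mod_cast htri)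

/-- For any monotone `alphaHat : ℕ → ℕ⁺` and any `m`, there is a graph with exactly `m`
edges, arboricity at most `alphaHat(m)`, and at least
`(2/3)·m·alphaHat(m) − (2/3)·m − (4/3)·alphaHat(m)³ − (2/3)·alphaHat(m)²` triangles. -/
theorem exists_graph_many_triangles (alphaHat : ℕ → ℕ+) (hmono : Monotone alphaHat) (m : ℕ) :
    ∃ (n : ℕ) (G : SimpleGraph (Fin n)) (_ : DecidableRel G.Adj),
      G.edgeFinset.card = m ∧
      arboricity G ≤ alphaHat m ∧
      ((G.cliqueFinset 3).card : ℚ) ≥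
        2/3 * m * (alphaHat m : ℚ) - 2/3 * m - 4/3 * (alphaHat m : ℚ)^3 - 2/3 * (alphaHat m : ℚ)^2 :=
  exists_graph_many_triangles_general alphaHat m
end

section
/- (AGM bound for the triangle query) For any three finite binary relations R, S, T over a domain, the number of triples (x,y,z) with (x,y) ∈ R, (y,z) ∈ S, and (x,z) ∈ T is at most √(|R|·|S|·|T|). In particular, if |R| = |S| = |T| = n, the count is at most n^{3/2}. -/
/-!
Group the output triples `(x, y, z)` by their `R`-projection `(x, y)`. By Cauchy–Schwarz the
square of the output size is at most `|R|` times the sum of the squared fibre sizes, and that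
sum counts pairs of triples `(x, y, z), (x, y, z')` sharing the projection; such a pair is
determined by `((y, z), (x, z')) ∈ S × T`, so the sum is at most `|S| · |T|`.
-/

open Finset

section TriangleJoin

variable {α β γ : Type*}

theorem sum_card_fiber_sq_le_card_mul_card [DecidableEq α] [DecidableEq β]
    {J : Finset (α × β × γ)} (R : Finset (α × β)) {S : Finset (β × γ)}
    {T : Finset (α × γ)}
    (hS : ∀ p ∈ J, (p.2.1, p.2.2) ∈ S) (hT : ∀ p ∈ J, (p.1, p.2.2) ∈ T) :
    ∑ q ∈ R, #{p ∈ J | (p.1, p.2.1) = q} ^ 2 ≤ #S * #T := by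
  let pairs := R.sigma fun q => {p ∈ J | (p.1, p.2.1) = q} ×ˢ {p ∈ J | (p.1, p.2.1) = q}
  have hpairs : #pairs = ∑ q ∈ R, #{p ∈ J | (p.1, p.2.1) = q} ^ 2 := by
    simp only [pairs, card_sigma, card_product, sq]
  rw [← hpairs, ← card_product]
  refine card_le_card_of_injOn (fun u => ((u.2.1.2.1, u.2.1.2.2), (u.2.2.1, u.2.2.2.2)))
    (fun u hu => ?_) (fun u hu v hv huv => ?_)
  · simp only [pairs, coe_sigma, Set.mem_sigma_iff, mem_coe, mem_product, mem_filter] at hu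
    exact mem_product.2 ⟨hS _ hu.2.1.1, hT _ hu.2.2.1⟩
  · obtain ⟨⟨a, b⟩, ⟨x, y, z⟩, ⟨x', y', z'⟩⟩ := u
    obtain ⟨⟨c, d⟩, ⟨v₁, v₂, v₃⟩, ⟨w₁, w₂, w₃⟩⟩ := v
    simp only [pairs, coe_sigma, Set.mem_sigma_iff, mem_coe, mem_product, mem_filter,
      Prod.mk.injEq] at hu hv huv
    grind

theorem card_sq_le_card_mul_card_mul_card [DecidableEq α] [DecidableEq β]
    {J : Finset (α × β × γ)} {R : Finset (α × β)} {S : Finset (β × γ)}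
    {T : Finset (α × γ)}
    (hJ : ∀ p ∈ J, (p.1, p.2.1) ∈ R ∧ (p.2.1, p.2.2) ∈ S ∧ (p.1, p.2.2) ∈ T) :
    #J ^ 2 ≤ #R * #S * #T := by
  have hfibres : #J = ∑ q ∈ R, #{p ∈ J | (p.1, p.2.1) = q} :=
    card_eq_sum_card_fiberwise fun p hp => (hJ p hp).1
  calc #J ^ 2 ≤ #R * ∑ q ∈ R, #{p ∈ J | (p.1, p.2.1) = q} ^ 2 :=
        hfibres ▸ sq_sum_le_card_mul_sum_sq
    _ ≤ #R * (#S * #T) :=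
        Nat.mul_le_mul_left _ <| sum_card_fiber_sq_le_card_mul_card R
          (fun p hp => (hJ p hp).2.1) (fun p hp => (hJ p hp).2.2)
    _ = #R * #S * #T := (mul_assoc _ _ _).symm

theorem ncard_le_sqrt_card_mul_card_mul_card {J : Set (α × β × γ)} {R : Finset (α × β)}
    {S : Finset (β × γ)} {T : Finset (α × γ)}
    (hJ : ∀ p ∈ J, (p.1, p.2.1) ∈ R ∧ (p.2.1, p.2.2) ∈ S ∧ (p.1, p.2.2) ∈ T) :
    (J.ncard : ℝ) ≤ √(#R * #S * #T) := by
  classical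
  have hfinite : J.Finite :=
    ((R ×ˢ S).finite_toSet.image fun u => (u.1.1, u.1.2, u.2.2)).subset fun p hp =>
      ⟨((p.1, p.2.1), (p.2.1, p.2.2)), mem_product.2 ⟨(hJ p hp).1, (hJ p hp).2.1⟩, rfl⟩
  rw [Set.ncard_eq_toFinset_card J hfinite]
  refine Real.le_sqrt_of_sq_le ?_
  exact_mod_cast card_sq_le_card_mul_card_mul_card fun p hp =>
    hJ p (hfinite.mem_toFinset.1 hp)

end TriangleJoin

theorem sqrt_natCast_mul_self_mul_self (n : ℕ) :
    √((n : ℝ) * n * n) = (n : ℝ) ^ (3 / 2 : ℝ) := by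
  rw [Real.sqrt_eq_rpow, show (3 / 2 : ℝ) = (3 : ℕ) * (1 / 2) by norm_num,
    Real.rpow_natCast_mul n.cast_nonneg, pow_three, mul_assoc]

/-- AGM bound for the triangle query: for finite binary relations `R`, `S`, `T`,
the number of triples `(x,y,z)` with `(x,y) ∈ R`, `(y,z) ∈ S`, `(x,z) ∈ T`
is at most `√(|R|·|S|·|T|)`.  In particular, if all three have size `n`, the
output has at most `n^{3/2}` tuples. -/
theorem agm_triangle_bound {A : Type*} (R S T : Finset (A × A)) :
    ((Set.ncard {p : A × A × A |
        (p.1, p.2.1) ∈ R ∧ (p.2.1, p.2.2) ∈ S ∧ (p.1, p.2.2) ∈ T} : ℝ)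
      ≤ Real.sqrt (R.card * S.card * T.card)) ∧
    ∀ n : ℕ, R.card = n → S.card = n → T.card = n →
      (Set.ncard {p : A × A × A |
          (p.1, p.2.1) ∈ R ∧ (p.2.1, p.2.2) ∈ S ∧ (p.1, p.2.2) ∈ T} : ℝ)
        ≤ (n : ℝ) ^ (3/2 : ℝ) := by
  have hbound := ncard_le_sqrt_card_mul_card_mul_card (J := {p : A × A × A |
    (p.1, p.2.1) ∈ R ∧ (p.2.1, p.2.2) ∈ S ∧ (p.1, p.2.2) ∈ T}) fun _ hp => hp
  refine ⟨hbound, fun n hR hS hT => ?_⟩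
  rw [hR, hS, hT, sqrt_natCast_mul_self_mul_self] at hbound
  exact hbound
end

section
/- For any graph G = (V,E) with directed version E⃗ oriented by a total order on V, the sum over directed edges (x,y) ∈ E⃗ of min{d⁺(x), d⁺(y)} is at most the sum over (x,y) ∈ E⃗ of min{deg_G(x), deg_G(y)}, which is at most 2·α(G)·|E|, where d⁺ denotes out-degree in E⃗ and deg_G degree in G. -/
open SimpleGraph Finset

section Aux
variable {V : Type*} [Fintype V] [DecidableEq V]

lemma isAcyclic_anti {F H : SimpleGraph V} (h : H ≤ F) (hF : F.IsAcyclic) : H.IsAcyclic :=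
  fun _ c hc => hF (c.mapLe h) (hc.mapLe h)

/-- An acyclic graph with an edge has a leaf. -/
lemma exists_leaf {F : SimpleGraph V} (hF : F.IsAcyclic) (hne : ∃ x y, F.Adj x y) :
    ∃ a b, F.Adj a b ∧ ∀ c, F.Adj a c → c = b := by
  classical
  set L : Set ℕ := {n | ∃ (u v : V) (p : F.Walk u v), p.IsPath ∧ p.length = n} with hL
  obtain ⟨x, y, hxy⟩ := hne
  have h1 : (1 : ℕ) ∈ L := ⟨x, y, Walk.cons hxy Walk.nil, by simp [hxy.ne], by simp⟩
  have hLne : L.Nonempty := ⟨1, h1⟩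
  have hbdd : BddAbove L := by
    refine ⟨Fintype.card V, ?_⟩
    rintro n ⟨u, v, p, hp, rfl⟩
    exact (hp.length_lt).le
  have hmem : sSup L ∈ L := Nat.sSup_mem hLne hbdd
  obtain ⟨u, v, p, hp, hlen⟩ := hmem
  have hpos : 1 ≤ sSup L := le_csSup hbdd h1
  cases p with
  | nil => simp at hlen; omega
  | @cons _ x' _ h' p' =>
    refine ⟨u, x', h', fun c hc => ?_⟩
    set p : F.Walk u v := Walk.cons h' p' with hpdef
    by_cases hcs : c ∈ p.support
    · -- edge u-c plus path u..c would be a cycle unless c = x'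
      have hq : (p.takeUntil c hcs).IsPath := hp.takeUntil hcs
      by_cases he : s(u, c) ∈ (p.takeUntil c hcs).edges
      · have hpe : s(u, c) ∈ p.edges := Walk.edges_takeUntil_subset _ hcs he
        rw [hpdef, Walk.edges_cons, List.mem_cons] at hpe
        rcases hpe with h1 | h2
        · rw [Sym2.congr_right] at h1
          exact h1
        · exfalso
          have hu : u ∈ p'.support := Walk.fst_mem_support_of_mem_edges _ h2
          have := (Walk.cons_isPath_iff h' p').mp hp
          exact this.2 hu
      · exfalso
        have hcyc : (Walk.cons hc.symm (p.takeUntil c hcs)).IsCycle := by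
          rw [Walk.cons_isCycle_iff]
          exact ⟨hq, by rw [Sym2.eq_swap]; exact he⟩
        exact hF _ hcyc
    · -- can extend the path, contradicting maximality
      exfalso
      have hp2 : (Walk.cons hc.symm p).IsPath := (Walk.cons_isPath_iff _ _).mpr ⟨hp, hcs⟩
      have : (sSup L) + 1 ∈ L := ⟨c, v, Walk.cons hc.symm p, hp2, by simp [hlen]⟩
      have := le_csSup hbdd this
      omega

/-- Injective assignment of an endpoint to each edge of a forest (edge set given
as a finset of nondiagonal Sym2's forming an acyclic graph). -/
lemma forest_injection : ∀ (n : ℕ) (s : Finset (Sym2 V)),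
    s.card ≤ n → (∀ e ∈ s, ¬ e.IsDiag) → (fromEdgeSet (↑s : Set (Sym2 V))).IsAcyclic →
    ∃ φ : Sym2 V → V, (∀ e ∈ s, φ e ∈ e) ∧ Set.InjOn φ ↑s := by
  intro n
  induction n with
  | zero =>
    intro s hcard _ _
    have : s = ∅ := Finset.card_eq_zero.mp (Nat.le_zero.mp hcard)
    subst this
    have hex : ∀ e : Sym2 V, ∃ v, v ∈ e :=
      fun e => Sym2.inductionOn e (fun x y => ⟨x, Sym2.mem_mk_left x y⟩)
    exact ⟨fun e => (hex e).choose, by simp, by simp⟩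
  | succ n ih =>
    intro s hcard hdiag hacyc
    rcases Finset.eq_empty_or_nonempty s with rfl | hne
    · have hex : ∀ e : Sym2 V, ∃ v, v ∈ e :=
        fun e => Sym2.inductionOn e (fun x y => ⟨x, Sym2.mem_mk_left x y⟩)
      exact ⟨fun e => (hex e).choose, by simp, by simp⟩
    · obtain ⟨e0, he0⟩ := hne
      -- the graph has an edge
      obtain ⟨a, b, hab, hleaf⟩ := exists_leaf hacyc (by
        refine Sym2.inductionOn e0 (fun x y hxy => ?_) he0
        exact ⟨x, y, by
          rw [fromEdgeSet_adj]
          exact ⟨Finset.mem_coe.mpr hxy, fun h => hdiag _ hxy (by simp [h])⟩⟩)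
      have habs : s(a, b) ∈ s := by
        rw [fromEdgeSet_adj] at hab
        exact Finset.mem_coe.mp hab.1
      set s' := s.erase s(a, b) with hs'
      have hsub : s' ⊆ s := Finset.erase_subset _ _
      have hcard' : s'.card ≤ n := by
        rw [hs', Finset.card_erase_of_mem habs]
        have h1 : 1 ≤ s.card := Finset.card_pos.mpr ⟨_, habs⟩
        omega
      have hacyc' : (fromEdgeSet (↑s' : Set (Sym2 V))).IsAcyclic :=
        isAcyclic_anti (fromEdgeSet_mono (by exact_mod_cast hsub)) hacyc
      obtain ⟨φ', hφ'mem, hφ'inj⟩ := ih s' hcard' (fun e he => hdiag e (hsub he)) hacyc'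
      -- key: no edge of s' contains a
      have hnota : ∀ e ∈ s', a ∉ e := by
        intro e he hae
        have heq : s(a, Sym2.Mem.other hae) = e := Sym2.other_spec hae
        have hadj : (fromEdgeSet (↑s : Set (Sym2 V))).Adj a (Sym2.Mem.other hae) := by
          rw [fromEdgeSet_adj]
          refine ⟨by rw [heq]; exact Finset.mem_coe.mpr (hsub he), ?_⟩
          intro h
          exact hdiag e (hsub he) (by rw [← heq, ← h]; simp)
        have := hleaf _ hadj
        rw [this] at heq
        rw [← heq] at he
        exact (Finset.notMem_erase _ _) he
      refine ⟨fun e => if e = s(a, b) then a else φ' e, ?_, ?_⟩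
      · intro e he
        by_cases h : e = s(a, b)
        · simp [h]
        · have : e ∈ s' := Finset.mem_erase.mpr ⟨h, he⟩
          simp only [if_neg h]
          exact hφ'mem e this
      · intro e1 he1 e2 he2 heq
        simp only [Finset.coe_sort_coe, Finset.mem_coe] at he1 he2
        by_cases h1 : e1 = s(a, b) <;> by_cases h2 : e2 = s(a, b)
        · rw [h1, h2]
        · exfalso
          have he2' : e2 ∈ s' := Finset.mem_erase.mpr ⟨h2, he2⟩
          simp only [if_pos h1, if_neg h2] at heq
          exact hnota e2 he2' (heq ▸ hφ'mem e2 he2')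
        · exfalso
          have he1' : e1 ∈ s' := Finset.mem_erase.mpr ⟨h1, he1⟩
          simp only [if_neg h1, if_pos h2] at heq
          exact hnota e1 he1' (heq ▸ hφ'mem e1 he1')
        · simp only [if_neg h1, if_neg h2] at heq
          exact hφ'inj (Finset.mem_coe.mpr (Finset.mem_erase.mpr ⟨h1, he1⟩))
            (Finset.mem_coe.mpr (Finset.mem_erase.mpr ⟨h2, he2⟩)) heq

end Aux

section Aux2
variable {V : Type*} [Fintype V] [DecidableEq V]

lemma sum_biUnion_le' {ι : Type*} (s : Finset ι) (t : ι → Finset (Sym2 V)) (g : Sym2 V → ℕ) :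
    ∑ x ∈ s.biUnion t, g x ≤ ∑ i ∈ s, ∑ x ∈ t i, g x := by
  classical
  induction s using Finset.induction with
  | empty => simp
  | @insert a s ha ih =>
    rw [Finset.biUnion_insert, Finset.sum_insert ha]
    have h3 : ∑ x ∈ t a ∪ s.biUnion t, g x ≤ ∑ x ∈ t a, g x + ∑ x ∈ s.biUnion t, g x := by
      have := Finset.sum_union_inter (s₁ := t a) (s₂ := s.biUnion t) (f := g)
      omega
    exact h3.trans (add_le_add le_rfl ih)

/-- Chiba–Nishizeki per-forest bound: for a forest with edges `s`, the sum over edges of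
the min weight of an endpoint is at most the total weight. -/
lemma forest_sum_le (s : Finset (Sym2 V)) (hdiag : ∀ e ∈ s, ¬ e.IsDiag)
    (hacyc : (fromEdgeSet (↑s : Set (Sym2 V))).IsAcyclic) (w : V → ℕ) :
    ∑ e ∈ s, Sym2.lift ⟨fun x y => min (w x) (w y), fun x y => by simp [min_comm]⟩ e
      ≤ ∑ v, w v := by
  classical
  obtain ⟨φ, hmem, hinj⟩ := forest_injection s.card s le_rfl hdiag hacyc
  calc ∑ e ∈ s, Sym2.lift ⟨fun x y => min (w x) (w y), fun x y => by simp [min_comm]⟩ e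
      ≤ ∑ e ∈ s, w (φ e) := by
        refine Finset.sum_le_sum (fun e he => ?_)
        refine Sym2.inductionOn e (fun x y hmem' => ?_) (hmem e he)
        rw [Sym2.lift_mk]
        rcases Sym2.mem_iff.mp hmem' with h | h <;> rw [h]
        · exact min_le_left _ _
        · exact min_le_right _ _
    _ = ∑ v ∈ s.image φ, w v := by
        rw [Finset.sum_image (fun x hx y hy h => hinj (Finset.mem_coe.mpr hx) (Finset.mem_coe.mpr hy) h)]
    _ ≤ ∑ v, w v := Finset.sum_le_sum_of_subset (Finset.subset_univ _)

/-- A graph whose edge set is contained in a singleton is acyclic. -/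
lemma single_edge_acyclic {H : SimpleGraph V} (e : Sym2 V) (h : H.edgeSet ⊆ {e}) :
    H.IsAcyclic := by
  intro v c hc
  have hlen : 3 ≤ c.length := hc.three_le_length
  have hnodup : c.edges.Nodup := hc.edges_nodup
  have hsub : c.edges.toFinset ⊆ {e} := by
    intro x hx
    rw [List.mem_toFinset] at hx
    have := h (c.edges_subset_edgeSet hx)
    simpa using this
  have h1 : c.edges.toFinset.card ≤ 1 := (Finset.card_le_card hsub).trans (by simp)
  have h2 : c.edges.toFinset.card = c.edges.length := List.toFinset_card_of_nodup hnodup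
  rw [c.length_edges] at h2
  omega

end Aux2

/-- For the directed version `E⃗` of `G` (each edge oriented from its smaller to its
larger endpoint), with out-degree `d⁺`:
`∑_{(x,y)∈E⃗} min (d⁺ x) (d⁺ y) ≤ ∑_{(x,y)∈E⃗} min (deg x) (deg y) ≤ 2·α(G)·|E|`. -/
theorem directed_sum_min_outdeg_le {V : Type*} [Fintype V] [LinearOrder V]
    (G : SimpleGraph V) [DecidableRel G.Adj] :
    let dE : Finset (V × V) := univ.filter (fun p => G.Adj p.1 p.2 ∧ p.1 < p.2)
    let dplus : V → ℕ := fun v => (univ.filter (fun w => G.Adj v w ∧ v < w)).card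
    (∑ p ∈ dE, min (dplus p.1) (dplus p.2)
        ≤ ∑ p ∈ dE, min (G.degree p.1) (G.degree p.2)) ∧
    (∑ p ∈ dE, min (G.degree p.1) (G.degree p.2)
        ≤ 2 * arboricity G * G.edgeFinset.card) := by
  classical
  intro dE dplus
  constructor
  · refine Finset.sum_le_sum fun p _ => ?_
    have h : ∀ v, dplus v ≤ G.degree v := by
      intro v
      apply Finset.card_le_card
      intro w hw
      simp only [Finset.mem_filter, Finset.mem_univ, true_and] at hw
      rw [mem_neighborFinset]
      exact hw.1
    exact min_le_min (h _) (h _)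
  · set M : Sym2 V → ℕ :=
      Sym2.lift ⟨fun x y => min (G.degree x) (G.degree y), fun x y => by simp [min_comm]⟩ with hM
    have hsum : ∑ p ∈ dE, min (G.degree p.1) (G.degree p.2) = ∑ e ∈ G.edgeFinset, M e := by
      refine Finset.sum_bij (fun p _ => s(p.1, p.2)) ?_ ?_ ?_ ?_
      · intro p hp
        simp only [dE, Finset.mem_filter, Finset.mem_univ, true_and] at hp
        rw [mem_edgeFinset, mem_edgeSet]
        exact hp.1
      · intro p hp q hq heq
        simp only [dE, Finset.mem_filter, Finset.mem_univ, true_and] at hp hq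
        rw [Sym2.eq_iff] at heq
        rcases heq with ⟨h1, h2⟩ | ⟨h1, h2⟩
        · exact Prod.ext h1 h2
        · exfalso
          rw [h1, h2] at hp
          exact lt_irrefl _ (hq.2.trans hp.2)
      · intro e he
        rw [mem_edgeFinset] at he
        refine Sym2.inductionOn e (fun x y hxy => ?_) he
        rw [mem_edgeSet] at hxy
        rcases lt_or_gt_of_ne (G.ne_of_adj hxy) with h | h
        · exact ⟨(x, y), by simp [dE, hxy, h], rfl⟩
        · exact ⟨(y, x), by simp [dE, hxy.symm, h], Sym2.eq_swap⟩
      · rintro ⟨x, y⟩ _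
        simp [hM]
    rw [hsum]
    -- arboricity decomposition exists
    have hA : arboricity G ∈ {n | ∃ f : Fin n → SimpleGraph V,
        (∀ i, (f i).IsAcyclic) ∧ (∀ i, f i ≤ G) ∧
        ∀ e ∈ G.edgeSet, ∃ i, e ∈ (f i).edgeSet} := by
      apply Nat.sInf_mem
      refine ⟨G.edgeFinset.card,
        fun i => fromEdgeSet {(G.edgeFinset.equivFin.symm i : Sym2 V)}, ?_, ?_, ?_⟩
      · intro i
        apply single_edge_acyclic ((G.edgeFinset.equivFin.symm i : Sym2 V))
        rw [edgeSet_fromEdgeSet]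
        exact Set.diff_subset
      · intro i
        have h1 : ({(G.edgeFinset.equivFin.symm i : Sym2 V)} : Set (Sym2 V)) ⊆ G.edgeSet := by
          rw [Set.singleton_subset_iff]
          exact mem_edgeFinset.mp (G.edgeFinset.equivFin.symm i).2
        calc fromEdgeSet {(G.edgeFinset.equivFin.symm i : Sym2 V)}
            ≤ fromEdgeSet G.edgeSet := fromEdgeSet_mono h1
          _ = G := fromEdgeSet_edgeSet G
      · intro e he
        refine ⟨G.edgeFinset.equivFin ⟨e, mem_edgeFinset.mpr he⟩, ?_⟩
        rw [edgeSet_fromEdgeSet]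
        constructor
        · simp
        · exact G.not_isDiag_of_mem_edgeSet he
    obtain ⟨f, hfa, hfle, hfc⟩ := hA
    set s : Fin (arboricity G) → Finset (Sym2 V) :=
      fun i => G.edgeFinset.filter (fun e => e ∈ (f i).edgeSet) with hs
    have hcov : G.edgeFinset ⊆ univ.biUnion s := by
      intro e he
      obtain ⟨i, hi⟩ := hfc e (mem_edgeFinset.mp he)
      exact Finset.mem_biUnion.mpr ⟨i, Finset.mem_univ i, Finset.mem_filter.mpr ⟨he, hi⟩⟩
    calc ∑ e ∈ G.edgeFinset, M e
        ≤ ∑ e ∈ univ.biUnion s, M e := Finset.sum_le_sum_of_subset hcov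
      _ ≤ ∑ i : Fin (arboricity G), ∑ e ∈ s i, M e := sum_biUnion_le' _ _ _
      _ ≤ ∑ _i : Fin (arboricity G), ∑ v, G.degree v := by
          refine Finset.sum_le_sum fun i _ => ?_
          refine forest_sum_le (s i) ?_ ?_ (fun v => G.degree v)
          · intro e he
            exact G.not_isDiag_of_mem_edgeSet
              (mem_edgeFinset.mp (Finset.mem_filter.mp he).1)
          · refine isAcyclic_anti ?_ (hfa i)
            have h1 : (↑(s i) : Set (Sym2 V)) ⊆ (f i).edgeSet := by
              intro e he
              exact (Finset.mem_filter.mp (Finset.mem_coe.mp he)).2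
            calc fromEdgeSet (↑(s i) : Set (Sym2 V))
                ≤ fromEdgeSet (f i).edgeSet := fromEdgeSet_mono h1
              _ = f i := fromEdgeSet_edgeSet (f i)
      _ = 2 * arboricity G * G.edgeFinset.card := by
          rw [Finset.sum_const, G.sum_degrees_eq_twice_card_edges]
          simp [mul_comm, mul_assoc, mul_left_comm]
end

section
/- If a relation R with n attributes is stored so that slices can be enumerated, then a union of disjoint boxes partitioning the n-dimensional search space [−∞,∞]^n, where at each dimension i the interval boundaries are chosen by a monotone sweep, covers every tuple of the search space exactly once; hence a full conjunctive query evaluated box-by-box over such a partition produces each output tuple exactly once. -/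
/-- Boxing partitions the search space: if for each dimension `i` the chosen
intervals `S i j` are pairwise disjoint and cover the whole domain, then the
boxes `B j = {f | ∀ i, f i ∈ S i (j i)}` are pairwise disjoint and cover the
whole `n`-dimensional product space — hence a full conjunctive query evaluated
box-by-box produces every output tuple exactly once. -/
theorem boxes_partition_space {n : ℕ} {D κ : Type*}
    (S : Fin n → κ → Set D)
    (hdisj : ∀ i, Pairwise (Function.onFun Disjoint (S i)))
    (hcover : ∀ i, (⋃ j, S i j) = Set.univ) :
    Pairwise (Function.onFun Disjoint
      (fun j : Fin n → κ => {f : Fin n → D | ∀ i, f i ∈ S i (j i)})) ∧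
    (⋃ j : Fin n → κ, {f : Fin n → D | ∀ i, f i ∈ S i (j i)}) = Set.univ := by
  constructor
  · intro j₁ j₂ hne
    obtain ⟨i, hi⟩ := Function.ne_iff.mp hne
    refine Set.disjoint_left.mpr fun f h1 h2 => ?_
    exact Set.disjoint_left.mp (hdisj i hi) (h1 i) (h2 i)
  · ext f
    simp only [Set.mem_iUnion, Set.mem_setOf_eq, Set.mem_univ, iff_true]
    have : ∀ i, ∃ k, f i ∈ S i k := fun i => by
      have := (hcover i).symm ▸ Set.mem_univ (f i)
      simpa using this
    choose j hj using this
    exact ⟨j, hj⟩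
end
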